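/- arXiv:2011.12781 — 2 statements merged into one kernel-verified Lean document; each statement's English description precedes it below -/
import Mathlib

section
/- (Phillips–Solo / Beveridge–Nelson decomposition, deterministic form.) Let (Φ_j)_{j≥0} be bounded linear operators on H with Σ_{j≥1} j·‖Φ_j‖_op < ∞ and Σ_{j≥0} ‖Φ_j‖_op < ∞, and let ε : ℤ → H satisfy ‖ε_t‖ ≤ M for all t ∈ ℤ and some M > 0. Set Φ̃_j := −Σ_{k=j+1}^∞ Φ_k, Φ(1) := Σ_{j=0}^∞ Φ_j, and define ζ_t := Σ_{j=0}^∞ Φ_j ε_{t−j} and η_t := Σ_{j=0}^∞ Φ̃_j ε_{t−j}; all of these series converge absolutely in H. Then for every integer t ≥ 1: Σ_{s=1}^t ζ_s = Φ(1)(Σ_{s=1}^t ε_s) + η_t − η_0. -/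
/-!
Abel summation in the lag index. With `Φ̃_j = -∑_{k>j} Φ_k` one has `Φ_0 = Φ(1) + Φ̃_0` and
`Φ_j = Φ̃_j - Φ̃_{j-1}` for `j ≥ 1`, so `ζ_t = Φ(1) ε_t + η_t - η_{t-1}`, and the sum over
`s = 1, …, t` telescopes. The series defining `η` converges absolutely because
`∑_j ‖Φ̃_j‖ ≤ ∑_j ∑_{k>j} ‖Φ_k‖ = ∑_k k ‖Φ_k‖`.
-/

open Finset

theorem summable_tsum_tail_of_summable_nat_mul {g : ℕ → ℝ} (hg : 0 ≤ g)
    (h : Summable fun n : ℕ => (n : ℝ) * g n) :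
    Summable fun j : ℕ => ∑' k : ℕ, g (j + 1 + k) := by
  -- the pairs `(j, k)` with `j + k = n` contribute `(n + 1) g (n + 1)` in total
  have hfiber : ∀ n : ℕ, ∑' p : antidiagonal n, g ((p : ℕ × ℕ).1 + 1 + (p : ℕ × ℕ).2) =
      ((n + 1 : ℕ) : ℝ) * g (n + 1) := by
    intro n
    rw [Finset.tsum_subtype (antidiagonal n) (fun p => g (p.1 + 1 + p.2)),
      sum_congr rfl fun p hp => by rw [add_right_comm, mem_antidiagonal.1 hp],
      sum_const, Nat.card_antidiagonal, nsmul_eq_mul]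
  have hpairs : Summable fun p : ℕ × ℕ => g (p.1 + 1 + p.2) := by
    rw [← HasAntidiagonal.sigmaAntidiagonalEquivProd.summable_iff]
    refine (summable_sigma_of_nonneg fun _ => hg _).2 ⟨fun _ => .of_finite, ?_⟩
    refine ((summable_nat_add_iff 1).2 h).congr fun n => ?_
    rw [← hfiber]
    rfl
  exact ((summable_prod_of_nonneg fun _ => hg _).1 hpairs).2

theorem summable_norm_tsum_tail {E : Type*} [SeminormedAddCommGroup E] {a : ℕ → E}
    (h : Summable fun n : ℕ => (n : ℝ) * ‖a n‖) (ha : Summable fun n : ℕ => ‖a n‖) :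
    Summable fun j : ℕ => ‖∑' k : ℕ, a (j + 1 + k)‖ :=
  (summable_tsum_tail_of_summable_nat_mul (fun _ => norm_nonneg _) h).of_nonneg_of_le
    (fun _ => norm_nonneg _)
    fun j => norm_tsum_le_tsum_norm (ha.comp_injective (add_right_injective (j + 1)))

theorem summable_norm_apply_of_norm_le {ι 𝕜 E F : Type*} [NontriviallyNormedField 𝕜]
    [SeminormedAddCommGroup E] [NormedSpace 𝕜 E] [SeminormedAddCommGroup F] [NormedSpace 𝕜 F]
    {T : ι → E →L[𝕜] F} {x : ι → E} {M : ℝ}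
    (hT : Summable fun i => ‖T i‖) (hx : ∀ i, ‖x i‖ ≤ M) :
    Summable fun i => ‖T i (x i)‖ :=
  (hT.mul_right M).of_nonneg_of_le (fun _ => norm_nonneg _) fun i => (T i).le_opNorm_of_le (hx i)

section TopologicalGroup

variable {G : Type*} [AddCommGroup G] [TopologicalSpace G] [IsTopologicalAddGroup G] [T2Space G]

theorem Summable.tsum_nat_add_eq_add {f : ℕ → G} (hf : Summable f) (n : ℕ) :
    ∑' k : ℕ, f (n + k) = f n + ∑' k : ℕ, f (n + 1 + k) := by
  have htail : Summable fun k => f (n + k) := by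
    simpa only [add_comm n] using (summable_nat_add_iff n).2 hf
  rw [htail.tsum_eq_zero_add]
  simp only [add_zero, add_assoc, add_comm 1]

theorem tsum_eq_of_succ_eq_sub {c d e : ℕ → G} (hc : ∀ j, c (j + 1) = d (j + 1) - e j)
    (hd : Summable d) (he : Summable e) :
    ∑' j, c j = c 0 - d 0 + ∑' j, d j - ∑' j, e j := by
  have hd' : Summable fun j => d (j + 1) := (summable_nat_add_iff 1).2 hd
  have hc' : Summable c := (summable_nat_add_iff 1).1 <| by
    simpa only [hc] using hd'.sub he
  rw [hc'.tsum_eq_zero_add, hd.tsum_eq_zero_add]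
  simp only [hc]
  rw [hd'.tsum_sub he]
  abel

end TopologicalGroup

theorem sum_Icc_sub_pred {G : Type*} [AddCommGroup G] (η : ℤ → G) (t : ℕ) :
    ∑ s ∈ Icc 1 t, (η s - η (s - 1)) = η t - η 0 := by
  induction t with
  | zero => simp
  | succ t ih =>
    rw [sum_Icc_succ_top (by omega), ih]
    push_cast
    rw [add_sub_cancel_right]
    abel

theorem beveridgeNelson_tsum_apply {𝕜 E F : Type*} [NontriviallyNormedField 𝕜]
    [NormedAddCommGroup E] [NormedSpace 𝕜 E] [NormedAddCommGroup F] [NormedSpace 𝕜 F]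
    {Φ Φt : ℕ → E →L[𝕜] F} (hΦ : Summable Φ) (hΦt : ∀ j : ℕ, Φt j = -∑' k : ℕ, Φ (j + 1 + k))
    (x : ℤ → E) (t : ℤ) (hΦtx : ∀ s : ℤ, Summable fun j : ℕ => Φt j (x (s - j))) :
    ∑' j : ℕ, Φ j (x (t - j)) =
      (∑' j : ℕ, Φ j) (x t) + (∑' j : ℕ, Φt j (x (t - j)) - ∑' j : ℕ, Φt j (x (t - 1 - j))) := by
  have hsucc : ∀ j, Φ (j + 1) = Φt (j + 1) - Φt j := fun j => by
    rw [hΦt, hΦt, hΦ.tsum_nat_add_eq_add (j + 1)]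
    abel
  have hzero : Φ 0 - Φt 0 = ∑' j, Φ j := by
    rw [hΦt, hΦ.tsum_eq_zero_add]
    simp only [zero_add, add_comm 1, sub_neg_eq_add]
  rw [tsum_eq_of_succ_eq_sub (fun j => ?_) (hΦtx t) (hΦtx (t - 1)), ← hzero]
  · simp only [Nat.cast_zero, sub_zero, sub_apply]
    abel
  · rw [hsucc, sub_apply, Nat.cast_succ, sub_add_eq_sub_sub_swap]

theorem stmt2_general {H : Type*} [NormedAddCommGroup H] [InnerProductSpace ℝ H]
    [CompleteSpace H]
    (Φ : ℕ → H →L[ℝ] H) (ε : ℤ → H) (M : ℝ)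
    (hε : ∀ t : ℤ, ‖ε t‖ ≤ M)
    (h1 : Summable fun j : ℕ => (j : ℝ) * ‖Φ j‖)
    (h2 : Summable fun j : ℕ => ‖Φ j‖)
    (Φt : ℕ → H →L[ℝ] H) (hΦt : ∀ j : ℕ, Φt j = -∑' k : ℕ, Φ (j + 1 + k))
    (Φ1 : H →L[ℝ] H) (hΦ1 : Φ1 = ∑' j : ℕ, Φ j)
    (ζ η : ℤ → H)
    (hζ : ∀ t : ℤ, ζ t = ∑' j : ℕ, Φ j (ε (t - (j : ℤ))))
    (hη : ∀ t : ℤ, η t = ∑' j : ℕ, Φt j (ε (t - (j : ℤ)))) :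
    (∀ t : ℤ, Summable fun j : ℕ => ‖Φ j (ε (t - (j : ℤ)))‖) ∧
    (∀ t : ℤ, Summable fun j : ℕ => ‖Φt j (ε (t - (j : ℤ)))‖) ∧
    ∀ t : ℕ, 1 ≤ t →
      ∑ s ∈ Finset.Icc 1 t, ζ (s : ℤ) =
        Φ1 (∑ s ∈ Finset.Icc 1 t, ε (s : ℤ)) + η (t : ℤ) - η 0 := by
  have hΦt_norm : Summable fun j => ‖Φt j‖ := by
    simpa only [hΦt, norm_neg] using summable_norm_tsum_tail h1 h2
  have hζ_abs : ∀ t : ℤ, Summable fun j : ℕ => ‖Φ j (ε (t - j))‖ :=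
    fun t => summable_norm_apply_of_norm_le h2 fun _ => hε _
  have hη_abs : ∀ t : ℤ, Summable fun j : ℕ => ‖Φt j (ε (t - j))‖ :=
    fun t => summable_norm_apply_of_norm_le hΦt_norm fun _ => hε _
  have hstep : ∀ s : ℤ, ζ s = Φ1 (ε s) + (η s - η (s - 1)) := fun s => by
    rw [hζ, hη, hη, hΦ1]
    exact beveridgeNelson_tsum_apply h2.of_norm hΦt ε s fun s => (hη_abs s).of_norm
  refine ⟨hζ_abs, hη_abs, fun t _ => ?_⟩
  rw [sum_congr rfl fun (s : ℕ) _ => hstep s, sum_add_distrib, map_sum, sum_Icc_sub_pred]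
  abel

/-- Phillips–Solo / Beveridge–Nelson decomposition, deterministic form:
with `ζ_t = Σ_j Φ_j ε_{t-j}` and `η_t = Σ_j Φ̃_j ε_{t-j}` (absolutely convergent),
`Σ_{s=1}^t ζ_s = Φ(1)(Σ_{s=1}^t ε_s) + η_t - η_0` for every `t ≥ 1`. -/
theorem stmt2 {H : Type*} [NormedAddCommGroup H] [InnerProductSpace ℝ H]
    [CompleteSpace H] [TopologicalSpace.SeparableSpace H]
    (Φ : ℕ → H →L[ℝ] H) (ε : ℤ → H) (M : ℝ) (hM : 0 < M)
    (hε : ∀ t : ℤ, ‖ε t‖ ≤ M)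
    (h1 : Summable fun j : ℕ => (j : ℝ) * ‖Φ j‖)
    (h2 : Summable fun j : ℕ => ‖Φ j‖)
    (Φt : ℕ → H →L[ℝ] H) (hΦt : ∀ j : ℕ, Φt j = -∑' k : ℕ, Φ (j + 1 + k))
    (Φ1 : H →L[ℝ] H) (hΦ1 : Φ1 = ∑' j : ℕ, Φ j)
    (ζ η : ℤ → H)
    (hζ : ∀ t : ℤ, ζ t = ∑' j : ℕ, Φ j (ε (t - (j : ℤ))))
    (hη : ∀ t : ℤ, η t = ∑' j : ℕ, Φt j (ε (t - (j : ℤ)))) :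
    (∀ t : ℤ, Summable fun j : ℕ => ‖Φ j (ε (t - (j : ℤ)))‖) ∧
    (∀ t : ℤ, Summable fun j : ℕ => ‖Φt j (ε (t - (j : ℤ)))‖) ∧
    ∀ t : ℕ, 1 ≤ t →
      ∑ s ∈ Finset.Icc 1 t, ζ (s : ℤ) =
        Φ1 (∑ s ∈ Finset.Icc 1 t, ε (s : ℤ)) + η (t : ℤ) - η 0 :=
  stmt2_general Φ ε M hε h1 h2 Φt hΦt Φ1 hΦ1 ζ η hζ hη
end

section
/- (Cointegrating vectors annihilate the stochastic-trend component.) Let (Φ_j)_{j≥0} be bounded linear operators on H with Σ_{j≥1} j·‖Φ_j‖_op < ∞ and Σ_{j≥0} ‖Φ_j‖_op < ∞, and let ε : ℤ → H satisfy ‖ε_t‖ ≤ M for all t ∈ ℤ and some M > 0. Set Φ̃_j := −Σ_{k=j+1}^∞ Φ_k, Φ(1) := Σ_{j=0}^∞ Φ_j, ζ_t := Σ_{j=0}^∞ Φ_j ε_{t−j}, and η_t := Σ_{j=0}^∞ Φ̃_j ε_{t−j}. If x ∈ H satisfies ⟨Φ(1)h, x⟩ = 0 for every h ∈ H (i.e.,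 x is orthogonal to the range of Φ(1)), then for every integer t ≥ 1: ⟨Σ_{s=1}^t ζ_s, x⟩ = ⟨η_t, x⟩ − ⟨η_0, x⟩. -/
open scoped RealInnerProductSpace

/-!
This is the Beveridge–Nelson decomposition. Summation by parts on the coefficients gives
`ζ_t = Φ(1) ε_t + η_t - η_{t-1}` (the condition `∑ j * ‖Φ_j‖ < ∞` is what makes `η` well
defined), so `∑_{s=1}^t ζ_s = Φ(1) (∑_{s=1}^t ε_s) + η_t - η_0`, and pairing with
`x ⊥ range Φ(1)` removes the stochastic trend.
-/

open Finset

theorem summable_tsum_add_succ_of_summable_nat_mul {a : ℕ → ℝ} (ha : ∀ n, 0 ≤ a n)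
    (h : Summable fun n : ℕ => (n : ℝ) * a n) :
    Summable fun j : ℕ => ∑' k : ℕ, a (j + 1 + k) := by
  -- Reindex by `(j, k) ↦ (j + 1 + k, j)`: then `g (n, j) = a n` for `j < n`, and the `n`-th row
  -- of `g` sums to `n * a n`.
  set g : ℕ × ℕ → ℝ := fun p => if p.2 < p.1 then a p.1 else 0
  have hg_nonneg : 0 ≤ g := fun p => by dsimp only [g]; split <;> simp [ha]
  have hg_row : ∀ n : ℕ, HasSum (fun j => g (n, j)) ((n : ℝ) * a n) := by
    intro n
    have hsupp : ∀ j ∉ range n, g (n, j) = 0 := fun j hj => if_neg (mt mem_range.2 hj)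
    have hs : HasSum (fun j => g (n, j)) (∑ j ∈ range n, g (n, j)) :=
      hasSum_sum_of_ne_finset_zero hsupp
    convert hs using 1
    simp [g, sum_ite_of_true (fun j hj => mem_range.1 hj)]
  have hg : Summable g :=
    (summable_prod_of_nonneg hg_nonneg).2
      ⟨fun n => (hg_row n).summable, h.congr fun n => ((hg_row n).tsum_eq).symm⟩
  have hinj : Function.Injective fun p : ℕ × ℕ => (p.1 + 1 + p.2, p.1) := by
    rintro ⟨j, k⟩ ⟨j', k'⟩ hjk
    simp only [Prod.mk.injEq] at hjk
    ext <;> omega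
  have hf : Summable fun p : ℕ × ℕ => a (p.1 + 1 + p.2) :=
    (hg.comp_injective hinj).congr fun p => if_pos (by simp only; omega)
  exact ((summable_prod_of_nonneg fun p => ha _).1 hf).2

theorem tsum_nat_add_eq_add_tsum {G : Type*} [AddCommGroup G] [TopologicalSpace G]
    [IsTopologicalAddGroup G] [T2Space G] {f : ℕ → G} (hf : Summable f) (j : ℕ) :
    ∑' k : ℕ, f (j + k) = f j + ∑' k : ℕ, f (j + 1 + k) := by
  have hj : Summable fun k => f (j + k) :=
    ((summable_nat_add_iff j).2 hf).congr fun k => by rw [add_comm]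
  rw [hj.tsum_eq_zero_add]
  simp only [add_zero, add_assoc, add_comm 1]

theorem sum_Icc_sub_sub_one {G : Type*} [AddCommGroup G] (g : ℤ → G) (t : ℕ) :
    ∑ s ∈ Icc 1 t, (g s - g (s - 1)) = g t - g 0 := by
  induction t with
  | zero => simp
  | succ n ih =>
    rw [sum_Icc_succ_top (by omega), ih]
    push_cast
    rw [add_sub_cancel_right]
    abel

section LinearProcess

variable {𝕜 E F : Type*} [NontriviallyNormedField 𝕜] [SeminormedAddCommGroup E]
  [NormedSpace 𝕜 E] [NormedAddCommGroup F] [NormedSpace 𝕜 F]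

noncomputable def linearProcess (Ψ : ℕ → E →L[𝕜] F) (ε : ℤ → E) (t : ℤ) : F :=
  ∑' j : ℕ, Ψ j (ε (t - j))

noncomputable def beveridgeNelsonCoeff (Φ : ℕ → E →L[𝕜] F) (j : ℕ) : E →L[𝕜] F :=
  -∑' k : ℕ, Φ (j + 1 + k)

theorem summable_linearProcess_terms [CompleteSpace F] {Ψ : ℕ → E →L[𝕜] F}
    (hΨ : Summable fun j => ‖Ψ j‖) {ε : ℤ → E} {M : ℝ} (hε : ∀ t, ‖ε t‖ ≤ M) (t : ℤ) :
    Summable fun j : ℕ => Ψ j (ε (t - j)) :=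
  .of_norm_bounded (hΨ.mul_right M) fun j => (Ψ j).le_opNorm_of_le (hε _)

theorem linearProcess_sub_linearProcess_sub_one [CompleteSpace F]
    {Φ Ψ : ℕ → E →L[𝕜] F} (hΦ : Summable fun j => ‖Φ j‖) (hΨ : Summable fun j => ‖Ψ j‖)
    (hΨΦ : ∀ j, Ψ (j + 1) - Ψ j = Φ (j + 1)) {ε : ℤ → E} {M : ℝ} (hε : ∀ t, ‖ε t‖ ≤ M)
    (t : ℤ) :
    linearProcess Ψ ε t - linearProcess Ψ ε (t - 1) =
      linearProcess Φ ε t - (Φ 0 - Ψ 0) (ε t) := by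
  have hshift : ∑' j : ℕ, Ψ (j + 1) (ε (t - (j + 1 : ℕ))) - linearProcess Ψ ε (t - 1) =
      ∑' j : ℕ, Φ (j + 1) (ε (t - (j + 1 : ℕ))) := by
    rw [linearProcess, ← ((summable_nat_add_iff 1).2
      (summable_linearProcess_terms hΨ hε t)).tsum_sub (summable_linearProcess_terms hΨ hε (t - 1))]
    refine tsum_congr fun j => ?_
    rw [← hΨΦ, sub_apply]
    congr 3
    push_cast
    ring
  have hΨt := (summable_linearProcess_terms hΨ hε t).tsum_eq_zero_add
  have hΦt := (summable_linearProcess_terms hΦ hε t).tsum_eq_zero_add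
  unfold linearProcess at *
  rw [hΨt, hΦt, ← hshift]
  simp only [CharP.cast_eq_zero, sub_zero, sub_apply]
  abel

theorem beveridgeNelsonCoeff_succ_sub [CompleteSpace F] {Φ : ℕ → E →L[𝕜] F}
    (hΦ : Summable fun j => ‖Φ j‖) (j : ℕ) :
    beveridgeNelsonCoeff Φ (j + 1) - beveridgeNelsonCoeff Φ j = Φ (j + 1) := by
  rw [beveridgeNelsonCoeff, beveridgeNelsonCoeff, tsum_nat_add_eq_add_tsum hΦ.of_norm (j + 1)]
  abel

theorem sub_beveridgeNelsonCoeff_zero [CompleteSpace F] {Φ : ℕ → E →L[𝕜] F}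
    (hΦ : Summable fun j => ‖Φ j‖) :
    Φ 0 - beveridgeNelsonCoeff Φ 0 = ∑' j : ℕ, Φ j := by
  have h0 := tsum_nat_add_eq_add_tsum hΦ.of_norm 0
  simp only [zero_add] at h0
  rw [beveridgeNelsonCoeff, zero_add, h0, sub_neg_eq_add]

theorem summable_norm_beveridgeNelsonCoeff {Φ : ℕ → E →L[𝕜] F}
    (hΦ : Summable fun j => ‖Φ j‖) (hΦ' : Summable fun j : ℕ => (j : ℝ) * ‖Φ j‖) :
    Summable fun j => ‖beveridgeNelsonCoeff Φ j‖ := by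
  refine .of_nonneg_of_le (fun _ => norm_nonneg _) (fun j => ?_)
    (summable_tsum_add_succ_of_summable_nat_mul (fun _ => norm_nonneg _) hΦ')
  have htail : Summable fun k => ‖Φ (j + 1 + k)‖ :=
    ((summable_nat_add_iff (j + 1)).2 hΦ).congr fun k => by rw [add_comm]
  rw [beveridgeNelsonCoeff, norm_neg]
  exact norm_tsum_le_tsum_norm htail

theorem linearProcess_eq_add_beveridgeNelson [CompleteSpace F] {Φ : ℕ → E →L[𝕜] F}
    (hΦ : Summable fun j => ‖Φ j‖) (hΦ' : Summable fun j : ℕ => (j : ℝ) * ‖Φ j‖)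
    {ε : ℤ → E} {M : ℝ} (hε : ∀ t, ‖ε t‖ ≤ M) (t : ℤ) :
    linearProcess Φ ε t = (∑' j, Φ j) (ε t) +
      (linearProcess (beveridgeNelsonCoeff Φ) ε t -
        linearProcess (beveridgeNelsonCoeff Φ) ε (t - 1)) := by
  rw [linearProcess_sub_linearProcess_sub_one hΦ (summable_norm_beveridgeNelsonCoeff hΦ hΦ')
    (beveridgeNelsonCoeff_succ_sub hΦ) hε, sub_beveridgeNelsonCoeff_zero hΦ]
  abel

theorem sum_Icc_linearProcess [CompleteSpace F] {Φ : ℕ → E →L[𝕜] F}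
    (hΦ : Summable fun j => ‖Φ j‖) (hΦ' : Summable fun j : ℕ => (j : ℝ) * ‖Φ j‖)
    {ε : ℤ → E} {M : ℝ} (hε : ∀ t, ‖ε t‖ ≤ M) (t : ℕ) :
    ∑ s ∈ Icc 1 t, linearProcess Φ ε s = (∑' j, Φ j) (∑ s ∈ Icc 1 t, ε s) +
      (linearProcess (beveridgeNelsonCoeff Φ) ε t - linearProcess (beveridgeNelsonCoeff Φ) ε 0) := by
  simp only [linearProcess_eq_add_beveridgeNelson hΦ hΦ' hε, sum_add_distrib, map_sum]
  rw [sum_Icc_sub_sub_one (linearProcess (beveridgeNelsonCoeff Φ) ε)]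

end LinearProcess

theorem stmt3_general {H : Type*} [NormedAddCommGroup H] [InnerProductSpace ℝ H]
    [CompleteSpace H]
    (Φ : ℕ → H →L[ℝ] H) (ε : ℤ → H) (M : ℝ)
    (hε : ∀ t : ℤ, ‖ε t‖ ≤ M)
    (h1 : Summable fun j : ℕ => (j : ℝ) * ‖Φ j‖)
    (h2 : Summable fun j : ℕ => ‖Φ j‖)
    (Φt : ℕ → H →L[ℝ] H) (hΦt : ∀ j : ℕ, Φt j = -∑' k : ℕ, Φ (j + 1 + k))
    (Φ1 : H →L[ℝ] H) (hΦ1 : Φ1 = ∑' j : ℕ, Φ j)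
    (ζ η : ℤ → H)
    (hζ : ∀ t : ℤ, ζ t = ∑' j : ℕ, Φ j (ε (t - (j : ℤ))))
    (hη : ∀ t : ℤ, η t = ∑' j : ℕ, Φt j (ε (t - (j : ℤ))))
    (x : H) (hx : ∀ h : H, ⟪Φ1 h, x⟫ = 0) :
    ∀ t : ℕ, 1 ≤ t →
      ⟪∑ s ∈ Finset.Icc 1 t, ζ (s : ℤ), x⟫ = ⟪η (t : ℤ), x⟫ - ⟪η 0, x⟫ := by
  intro t _
  obtain rfl : Φt = beveridgeNelsonCoeff Φ := funext hΦt
  obtain rfl : ζ = linearProcess Φ ε := funext hζ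
  obtain rfl : η = linearProcess (beveridgeNelsonCoeff Φ) ε := funext hη
  subst hΦ1
  rw [sum_Icc_linearProcess h2 h1 hε, inner_add_left, hx, zero_add, inner_sub_left]

/-- Cointegrating vectors annihilate the stochastic-trend component:
if `x` is orthogonal to the range of `Φ(1)`, then
`⟨Σ_{s=1}^t ζ_s, x⟩ = ⟨η_t, x⟩ - ⟨η_0, x⟩` for every `t ≥ 1`. -/
theorem stmt3 {H : Type*} [NormedAddCommGroup H] [InnerProductSpace ℝ H]
    [CompleteSpace H] [TopologicalSpace.SeparableSpace H]
    (Φ : ℕ → H →L[ℝ] H) (ε : ℤ → H) (M : ℝ) (hM : 0 < M)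
    (hε : ∀ t : ℤ, ‖ε t‖ ≤ M)
    (h1 : Summable fun j : ℕ => (j : ℝ) * ‖Φ j‖)
    (h2 : Summable fun j : ℕ => ‖Φ j‖)
    (Φt : ℕ → H →L[ℝ] H) (hΦt : ∀ j : ℕ, Φt j = -∑' k : ℕ, Φ (j + 1 + k))
    (Φ1 : H →L[ℝ] H) (hΦ1 : Φ1 = ∑' j : ℕ, Φ j)
    (ζ η : ℤ → H)
    (hζ : ∀ t : ℤ, ζ t = ∑' j : ℕ, Φ j (ε (t - (j : ℤ))))
    (hη : ∀ t : ℤ, η t = ∑' j : ℕ, Φt j (ε (t - (j : ℤ))))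
    (x : H) (hx : ∀ h : H, ⟪Φ1 h, x⟫ = 0) :
    ∀ t : ℕ, 1 ≤ t →
      ⟪∑ s ∈ Finset.Icc 1 t, ζ (s : ℤ), x⟫ = ⟪η (t : ℤ), x⟫ - ⟪η 0, x⟫ :=
  stmt3_general Φ ε M hε h1 h2 Φt hΦt Φ1 hΦ1 ζ η hζ hη x hx
end
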